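/- arXiv:2210.09800 — 2 statements merged into one kernel-verified Lean document; each statement's English description precedes it below -/
import Mathlib

section
/- Let f, g : [a,b] → ℝ be C² functions and s ∈ [a,b]. Assume f(s) = g(s) = f'(s) = g'(s) = 0, f''(s) > 0, and f(x) > 0 for all x ∈ [a,b] with x ≠ s. Then there exists a constant c > 0 such that f(x) ≥ c·|g(x)| for all x ∈ [a,b]. -/
open Set

theorem taylor_comparison (a b s : ℝ) (f g : ℝ → ℝ)
    (hab : a ≤ b) (hs : s ∈ Icc a b)
    (hf : ContDiffOn ℝ 2 f (Icc a b)) (hg : ContDiffOn ℝ 2 g (Icc a b))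
    (hfs : f s = 0) (hgs : g s = 0)
    (hfs' : derivWithin f (Icc a b) s = 0) (hgs' : derivWithin g (Icc a b) s = 0)
    (hfs'' : 0 < iteratedDerivWithin 2 f (Icc a b) s)
    (hfpos : ∀ x ∈ Icc a b, x ≠ s → 0 < f x) :
    ∃ c > 0, ∀ x ∈ Icc a b, c * |g x| ≤ f x := by
  rcases eq_or_lt_of_le hab with rfl | hab'
  · refine ⟨1, one_pos, fun x hx => ?_⟩
    have hx' : x = a := le_antisymm hx.2 hx.1
    have hs' : s = a := le_antisymm hs.2 hs.1
    rw [hx', ← hs', hgs, hfs, abs_zero, mul_zero]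
  set I := Icc a b with hIdef
  have hUD : UniqueDiffOn ℝ I := uniqueDiffOn_Icc hab'
  have hconv : Convex ℝ I := convex_Icc a b
  set f1 := derivWithin f I with hf1def
  set f2 := iteratedDerivWithin 2 f I with hf2def
  set g1 := derivWithin g I with hg1def
  set g2 := iteratedDerivWithin 2 g I with hg2def
  -- basic derivative facts
  have hfd : ∀ t ∈ I, HasDerivWithinAt f (f1 t) I t := fun t ht =>
    ((hf.differentiableOn two_ne_zero) t ht).hasDerivWithinAt
  have hgd : ∀ t ∈ I, HasDerivWithinAt g (g1 t) I t := fun t ht =>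
    ((hg.differentiableOn two_ne_zero) t ht).hasDerivWithinAt
  have hf1cd : ContDiffOn ℝ 1 f1 I := hf.derivWithin hUD (by norm_num)
  have hg1cd : ContDiffOn ℝ 1 g1 I := hg.derivWithin hUD (by norm_num)
  have hiter : ∀ (F : ℝ → ℝ) (t : ℝ), t ∈ I →
      iteratedDerivWithin 2 F I t = derivWithin (derivWithin F I) I t := by
    intro F t ht
    rw [iteratedDerivWithin_succ]
    exact derivWithin_congr (fun y hy => congrFun iteratedDerivWithin_one y)
      (congrFun iteratedDerivWithin_one t)
  have hf1d : ∀ t ∈ I, HasDerivWithinAt f1 (f2 t) I t := by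
    intro t ht
    have := ((hf1cd.differentiableOn one_ne_zero) t ht).hasDerivWithinAt
    rwa [hf2def, hiter f t ht]
  have hg1d : ∀ t ∈ I, HasDerivWithinAt g1 (g2 t) I t := by
    intro t ht
    have := ((hg1cd.differentiableOn one_ne_zero) t ht).hasDerivWithinAt
    rwa [hg2def, hiter g t ht]
  have hf2c : ContinuousOn f2 I := hf.continuousOn_iteratedDerivWithin (by norm_num) hUD
  have hg2c : ContinuousOn g2 I := hg.continuousOn_iteratedDerivWithin (by norm_num) hUD
  -- bound on g''
  obtain ⟨M, hM⟩ := isCompact_Icc.exists_bound_of_continuousOn hg2c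
  set M' := max M 1 with hM'def
  have hM'pos : (0:ℝ) < M' := lt_of_lt_of_le one_pos (le_max_right _ _)
  have hM' : ∀ x ∈ I, |g2 x| ≤ M' := fun x hx =>
    le_trans (hM x hx) (le_max_left _ _)
  -- first order bound on g'
  have hg1bd : ∀ t ∈ I, |g1 t| ≤ M' * |t - s| := by
    intro t ht
    have := Convex.norm_image_sub_le_of_norm_hasDerivWithin_le hg1d
      (fun x hx => hM' x hx) hconv hs ht
    simpa [hgs', Real.norm_eq_abs] using this
  -- second order bound on g
  have hgbd : ∀ x ∈ I, |g x| ≤ M' * (x - s) ^ 2 := by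
    intro x hx
    set J := uIcc s x with hJdef
    have hJI : J ⊆ I := uIcc_subset_Icc hs hx
    have habs : ∀ t ∈ J, |t - s| ≤ |x - s| := by
      intro t ht
      rw [Set.mem_uIcc] at ht
      rcases ht with ⟨h1, h2⟩ | ⟨h1, h2⟩
      · rw [abs_of_nonneg (by linarith : (0:ℝ) ≤ t - s),
          abs_of_nonneg (by linarith : (0:ℝ) ≤ x - s)]
        linarith
      · rw [abs_of_nonpos (by linarith : t - s ≤ 0),
          abs_of_nonpos (by linarith : x - s ≤ 0)]
        linarith
    have := Convex.norm_image_sub_le_of_norm_hasDerivWithin_le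
      (f' := g1) (fun t ht => (hgd t (hJI ht)).mono hJI)
      (fun t ht => le_trans (hg1bd t (hJI ht))
        (mul_le_mul_of_nonneg_left (habs t ht) (le_of_lt hM'pos)))
      (convex_uIcc s x) (left_mem_uIcc) (right_mem_uIcc)
    rw [hgs, sub_zero, Real.norm_eq_abs, Real.norm_eq_abs] at this
    calc |g x| ≤ M' * |x - s| * |x - s| := this
      _ = M' * (x - s) ^ 2 := by rw [mul_assoc, ← abs_mul, ← sq, abs_sq]
  -- neighborhood where f'' ≥ K/2
  set K := f2 s with hKdef
  have hKpos : 0 < K := hfs''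
  have hev : ∀ᶠ t in nhdsWithin s I, K / 2 < f2 t :=
    (hf2c s hs).eventually (eventually_gt_nhds (by linarith))
  rw [Filter.Eventually, Metric.mem_nhdsWithin_iff] at hev
  obtain ⟨ε, hεpos, hε⟩ := hev
  set ε' := ε / 2 with hε'def
  have hε'pos : 0 < ε' := by positivity
  have hf2low : ∀ t ∈ I, |t - s| ≤ ε' → K / 2 ≤ f2 t := by
    intro t ht habs
    exact le_of_lt (hε ⟨Metric.mem_ball.2 (by rw [Real.dist_eq]; linarith), ht⟩)
  -- lower bound for f near s
  set u : ℝ → ℝ := fun x => f x - K / 4 * (x - s) ^ 2 with hudef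
  set u1 : ℝ → ℝ := fun x => f1 x - K / 2 * (x - s) with hu1def
  have hud : ∀ t ∈ I, HasDerivWithinAt u (u1 t) I t := by
    intro t ht
    have h2 : HasDerivAt (fun x => K / 4 * (x - s) ^ 2) (K / 2 * (t - s)) t := by
      have := (((hasDerivAt_id t).sub_const s).pow 2).const_mul (K / 4)
      exact this.congr_deriv (by simp only [id_eq, Nat.cast_ofNat, pow_one, mul_one, Nat.reduceSub]; ring)
    exact (hfd t ht).sub h2.hasDerivWithinAt
  have hu1d : ∀ t ∈ I, HasDerivWithinAt u1 (f2 t - K / 2) I t := by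
    intro t ht
    have h2 : HasDerivAt (fun x => K / 2 * (x - s)) (K / 2) t := by
      simpa using ((hasDerivAt_id t).sub_const s).const_mul (K / 2)
    exact (hf1d t ht).sub h2.hasDerivWithinAt
  set J := I ∩ Icc (s - ε') (s + ε') with hJdef
  have hJI : J ⊆ I := inter_subset_left
  have hsJ : s ∈ J := ⟨hs, by constructor <;> linarith⟩
  have hJconv : Convex ℝ J := hconv.inter (convex_Icc _ _)
  have hJabs : ∀ t ∈ J, |t - s| ≤ ε' := by
    intro t ht
    rw [abs_sub_le_iff]
    exact ⟨by linarith [ht.2.2], by linarith [ht.2.1]⟩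
  have hu1cont : ContinuousOn u1 I :=
    (hf1cd.continuousOn).sub
      ((continuous_const.mul (continuous_id.sub continuous_const)).continuousOn)
  have hucont : ContinuousOn u I :=
    (hf.continuousOn).sub
      ((continuous_const.mul ((continuous_id.sub continuous_const).pow 2)).continuousOn)
  have hu1mono : MonotoneOn u1 J :=
    monotoneOn_of_hasDerivWithinAt_nonneg hJconv (hu1cont.mono hJI)
      (fun t ht => (hu1d t (hJI (interior_subset ht))).mono
        (interior_subset.trans hJI))
      (fun t ht => by
        have ht' := interior_subset ht
        have := hf2low t (hJI ht') (hJabs t ht')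
        linarith)
  have hu1s : u1 s = 0 := by simp [hu1def, hfs']
  have hus : u s = 0 := by simp [hudef, hfs]
  have hflow : ∀ x ∈ J, K / 4 * (x - s) ^ 2 ≤ f x := by
    intro x hx
    have key : 0 ≤ u x := by
      rcases le_total s x with hsx | hxs
      · have hmon : MonotoneOn u (J ∩ Ici s) :=
          monotoneOn_of_hasDerivWithinAt_nonneg (hJconv.inter (convex_Ici s))
            (hucont.mono (inter_subset_left.trans hJI))
            (fun t ht => (hud t (hJI (interior_subset ht).1)).mono
              ((interior_subset.trans inter_subset_left).trans hJI))
            (fun t ht => by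
              have ht' := interior_subset ht
              have := hu1mono hsJ ht'.1 ht'.2
              rw [hu1s] at this
              exact this)
        have := hmon ⟨hsJ, le_refl s⟩ ⟨hx, hsx⟩ hsx
        rwa [hus] at this
      · have hmon : AntitoneOn u (J ∩ Iic s) :=
          antitoneOn_of_hasDerivWithinAt_nonpos (hJconv.inter (convex_Iic s))
            (hucont.mono (inter_subset_left.trans hJI))
            (fun t ht => (hud t (hJI (interior_subset ht).1)).mono
              ((interior_subset.trans inter_subset_left).trans hJI))
            (fun t ht => by
              have ht' := interior_subset ht
              have := hu1mono ht'.1 hsJ ht'.2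
              rw [hu1s] at this
              exact this)
        have := hmon ⟨hx, hxs⟩ ⟨hsJ, le_refl s⟩ hxs
        rwa [hus] at this
    have : 0 ≤ f x - K / 4 * (x - s) ^ 2 := key
    linarith
  -- the near-s estimate
  have hnear : ∀ x ∈ I, |x - s| ≤ ε' → K / (4 * M') * |g x| ≤ f x := by
    intro x hx habs
    have hxJ : x ∈ J := ⟨hx, by
      rw [abs_sub_le_iff] at habs
      constructor <;> linarith [habs.1, habs.2]⟩
    calc K / (4 * M') * |g x| ≤ K / (4 * M') * (M' * (x - s) ^ 2) := by
          apply mul_le_mul_of_nonneg_left (hgbd x hx)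
          positivity
      _ = K / 4 * (x - s) ^ 2 := by field_simp
      _ ≤ f x := hflow x hxJ
  have hc1pos : 0 < K / (4 * M') := by positivity
  -- far region
  set S := I ∩ {x : ℝ | ε' ≤ |x - s|} with hSdef
  have hSclosed : IsClosed {x : ℝ | ε' ≤ |x - s|} :=
    isClosed_le continuous_const ((continuous_id.sub continuous_const).abs)
  have hScomp : IsCompact S := isCompact_Icc.inter_right hSclosed
  by_cases hSne : S.Nonempty
  · obtain ⟨x₀, hx₀S, hx₀min⟩ := hScomp.exists_isMinOn hSne
      (hf.continuousOn.mono inter_subset_left)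
    have hx₀ne : x₀ ≠ s := by
      intro h
      have := hx₀S.2
      rw [h] at this
      simp only [mem_setOf_eq, sub_self, abs_zero] at this
      linarith
    have hmpos : 0 < f x₀ := hfpos x₀ hx₀S.1 hx₀ne
    set G := M' * (b - a) ^ 2 with hGdef
    have hGpos : 0 < G := by
      have : 0 < b - a := by linarith
      positivity
    have hgG : ∀ x ∈ I, |g x| ≤ G := by
      intro x hx
      refine le_trans (hgbd x hx) (mul_le_mul_of_nonneg_left ?_ (le_of_lt hM'pos))
      have h1 : |x - s| ≤ b - a := by
        rw [abs_sub_le_iff]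
        constructor <;> linarith [hx.1, hx.2, hs.1, hs.2]
      calc (x - s) ^ 2 = |x - s| ^ 2 := (sq_abs _).symm
        _ ≤ (b - a) ^ 2 := pow_le_pow_left₀ (abs_nonneg _) h1 2
    refine ⟨min (K / (4 * M')) (f x₀ / G), lt_min hc1pos (by positivity), fun x hx => ?_⟩
    by_cases hcase : |x - s| ≤ ε'
    · calc min (K / (4 * M')) (f x₀ / G) * |g x| ≤ K / (4 * M') * |g x| :=
            mul_le_mul_of_nonneg_right (min_le_left _ _) (abs_nonneg _)
        _ ≤ f x := hnear x hx hcase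
    · have hxS : x ∈ S := ⟨hx, le_of_lt (lt_of_not_ge hcase)⟩
      calc min (K / (4 * M')) (f x₀ / G) * |g x| ≤ f x₀ / G * |g x| :=
            mul_le_mul_of_nonneg_right (min_le_right _ _) (abs_nonneg _)
        _ ≤ f x₀ / G * G :=
            mul_le_mul_of_nonneg_left (hgG x hx) (by positivity)
        _ = f x₀ := by field_simp
        _ ≤ f x := hx₀min hxS
  · refine ⟨K / (4 * M'), hc1pos, fun x hx => ?_⟩
    have hcase : |x - s| ≤ ε' := by
      by_contra h
      exact hSne ⟨x, hx, le_of_lt (lt_of_not_ge h)⟩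
    exact hnear x hx hcase
end

section
/- Let α > 1 and define s₁(x) = ln x + (α/(α−1))·x^(α−1) and e₁(x) = x + x^α for x > 0. Then for every fixed Θ > 0 the function θ ↦ E(θ|Θ) := e₁(θ) − e₁(Θ) − Θ·(s₁(θ) − s₁(Θ)) is nonnegative on (0,∞) and vanishes only at θ = Θ. -/
/-!
Writing `p = α / (α - 1)`, the relative entropy splits as
`(θ - Θ - Θ (log θ - log Θ)) + (θ ^ α - Θ ^ α - Θ p (θ ^ (α - 1) - Θ ^ (α - 1)))`.
The first summand is `Θ (t - 1 - log t)` with `t = θ / Θ`, positive unless `θ = Θ`; the second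
is nonnegative by Young's inequality for the conjugate exponents `p` and `α`.
-/

open Real

namespace Real

lemma mul_log_sub_log_le_sub {x y : ℝ} (hx : 0 < x) (hy : 0 < y) :
    y * (log x - log y) ≤ x - y := by
  have h := mul_le_mul_of_nonneg_left (log_le_sub_one_of_pos (div_pos hx hy)) hy.le
  rwa [log_div hx.ne' hy.ne', mul_sub_one, mul_div_cancel₀ x hy.ne'] at h

lemma mul_log_sub_log_lt_sub {x y : ℝ} (hx : 0 < x) (hy : 0 < y) (hxy : x ≠ y) :
    y * (log x - log y) < x - y := by
  have hxy' : x / y ≠ 1 := fun h => hxy ((div_eq_one_iff_eq hy.ne').mp h)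
  have h := mul_lt_mul_of_pos_left (log_lt_sub_one_of_pos (div_pos hx hy) hxy') hy
  rwa [log_div hx.ne' hy.ne', mul_sub_one, mul_div_cancel₀ x hy.ne'] at h

lemma mul_rpow_sub_one_sub_le_rpow_sub {α x y : ℝ} (hα : 1 < α) (hx : 0 ≤ x) (hy : 0 ≤ y) :
    y * (α / (α - 1) * x ^ (α - 1) - α / (α - 1) * y ^ (α - 1)) ≤ x ^ α - y ^ α := by
  have hα1 : 0 < α - 1 := by linarith
  have hpq : (α / (α - 1)).HolderConjugate α := (HolderConjugate.conjExponent hα).symm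
  have young := young_inequality_of_nonneg (rpow_nonneg hx (α - 1)) hy hpq
  have hxα : (x ^ (α - 1)) ^ (α / (α - 1)) = x ^ α := by
    rw [← rpow_mul hx, mul_div_cancel₀ _ hα1.ne']
  have hyα : y * y ^ (α - 1) = y ^ α := by
    rw [mul_comm, ← rpow_add_one' hy (by linarith), sub_add_cancel]
  rw [hxα] at young
  calc y * (α / (α - 1) * x ^ (α - 1) - α / (α - 1) * y ^ (α - 1))
      = α / (α - 1) * (x ^ (α - 1) * y) - α / (α - 1) * y ^ α := by rw [← hyα]; ring
    _ ≤ α / (α - 1) * (x ^ α / (α / (α - 1)) + y ^ α / α) - α / (α - 1) * y ^ α := by gcongr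
    _ = x ^ α - y ^ α := by field_simp; ring

end Real

theorem relative_entropy_nonlin_nonneg (α : ℝ) (hα : 1 < α) (Θ : ℝ) (hΘ : 0 < Θ) :
    ∀ θ : ℝ, 0 < θ →
      (0 ≤ (θ + θ ^ α) - (Θ + Θ ^ α)
            - Θ * ((Real.log θ + (α / (α - 1)) * θ ^ (α - 1))
                  - (Real.log Θ + (α / (α - 1)) * Θ ^ (α - 1)))) ∧
      ((θ + θ ^ α) - (Θ + Θ ^ α)
            - Θ * ((Real.log θ + (α / (α - 1)) * θ ^ (α - 1))
                  - (Real.log Θ + (α / (α - 1)) * Θ ^ (α - 1))) = 0 ↔ θ = Θ) := by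
  intro θ hθ
  have hpow := mul_rpow_sub_one_sub_le_rpow_sub hα hθ.le hΘ.le
  refine ⟨by linarith [mul_log_sub_log_le_sub hθ hΘ], fun hzero => ?_, fun h => by subst h; ring⟩
  by_contra hne
  linarith [mul_log_sub_log_lt_sub hθ hΘ hne]
end
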